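/- Fix an oriented cut path ξ of the 2-core of the cut graph X complementary to the holiest shortest path tree T, and let d₁ and d₂ be darts of ξ. Then the fundamental cycles cycle(T, d₁) and cycle(T, d₂) are homologous; in particular their homology signatures are equal. -/

import Mathlib

/-!
Common combinatorial framework for graphs cellularly embedded on orientable surfaces,
following Erickson, Fox, and Lkhamsuren, "Holiest Minimum-Cost Paths and Flows in
Surface Graphs".

A graph `G = (V, E, F)` embedded on an orientable surface is given combinatorially by a
finite set of darts together with a fixed-point-free involution `rev` (whose orbits are
the edges) and a permutation `next` (= π, whose orbits are the vertices); the faces are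
the orbits of `rev ∘ next`, and the genus `g` is determined by Euler's formula
`|V| - |E| + |F| = 2 - 2g`.
-/

noncomputable section

open Finset

open scoped Classical

set_option maxHeartbeats 1000000

structure CombSurface where
  /-- the darts -/
  D : Type
  /-- the vertices (orbits of `next`) -/
  V : Type
  /-- the faces (orbits of `rev ∘ next`) -/
  F : Type
  [finD : Fintype D]
  [deqD : DecidableEq D]
  [finV : Fintype V]
  [deqV : DecidableEq V]
  [finF : Fintype F]
  [deqF : DecidableEq F]
  /-- the reversal involution on darts; its orbits are the edges -/
  rev : D → D
  rev_invol : ∀ d, rev (rev d) = d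
  rev_ne : ∀ d, rev d ≠ d
  /-- the rotation permutation π: orbits are the darts directed into a common vertex,
  in counterclockwise order -/
  next : D → D
  next_bij : Function.Bijective next
  /-- the head of a dart: the orbit map of `next` -/
  head : D → V
  head_next : ∀ d, head (next d) = head d
  head_orbit : ∀ d₁ d₂, head d₁ = head d₂ → ∃ n : ℕ, next^[n] d₁ = d₂
  head_surj : Function.Surjective head
  /-- the face to the left of a dart: the orbit map of `rev ∘ next` -/
  left : D → F
  left_step : ∀ d, left (rev (next d)) = left d
  left_orbit : ∀ d₁ d₂, left d₁ = left d₂ → ∃ n : ℕ, (fun x => rev (next x))^[n] d₁ = d₂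
  left_surj : Function.Surjective left
  /-- the genus -/
  g : ℕ
  /-- Euler's formula `|V| - |E| + |F| = 2 - 2g` (with `2|E| = |D|`) -/
  euler : 2 * (Fintype.card V : ℤ) + 2 * (Fintype.card F : ℤ) - (Fintype.card D : ℤ)
      = 4 - 4 * (g : ℤ)

attribute [instance] CombSurface.finD CombSurface.deqD CombSurface.finV
  CombSurface.deqV CombSurface.finF CombSurface.deqF

namespace CombSurface

variable (S : CombSurface)

/-- The tail of a dart. -/
def tail (d : S.D) : S.V := S.head (S.rev d)

/-- The face to the right of a dart.  The dual dart of `d` crosses `d` from the face on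
its left to the face on its right; i.e. the dual dart of `d` has tail `S.left d` and
head `S.right d`. -/
def right (d : S.D) : S.F := S.left (S.rev d)

/-- The imbalance of a flow `f` at a vertex `v`: the net flow into `v`. -/
def imbalance (f : S.D → ℝ) (v : S.V) : ℝ :=
  ∑ d ∈ univ.filter (fun d => S.head d = v), f d -
    ∑ d ∈ univ.filter (fun d => S.tail d = v), f d

/-- `f` is the boundary flow of the potential function `α` on the faces. -/
def IsBoundary (f : S.D → ℝ) (α : S.F → ℝ) : Prop :=
  ∀ d, f d - f (S.rev d) = α (S.right d) - α (S.left d)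

/-- The dual imbalance of a dual flow `z` at a face `p`: the sum of `z` over all darts
whose dual darts have head `p`. -/
def dualImbalance (z : S.D → ℝ) (p : S.F) : ℝ :=
  ∑ d ∈ univ.filter (fun d => S.right d = p), z d

/-- A drainage with sink `r`: an antisymmetric dual flow whose dual imbalance is negative
at every face other than `r`. -/
def IsDrainage (z : S.D → ℝ) (r : S.F) : Prop :=
  (∀ d, z (S.rev d) = - z d) ∧ ∀ q, q ≠ r → S.dualImbalance z q < 0

/-- A set of darts closed under reversal (i.e. a set of edges). -/
def RevClosed (A : Finset S.D) : Prop := ∀ d ∈ A, S.rev d ∈ A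

/-- The edge set `A` connects all vertices of the primal graph. -/
def PrimalConnected (A : Finset S.D) : Prop :=
  ∀ v w : S.V, Relation.ReflTransGen (fun a b => ∃ d ∈ A, S.tail d = a ∧ S.head d = b) v w

/-- The edge set `A` connects all vertices of the dual graph (i.e. the faces). -/
def DualConnected (A : Finset S.D) : Prop :=
  ∀ p q : S.F, Relation.ReflTransGen (fun a b => ∃ d ∈ A, S.left d = a ∧ S.right d = b) p q

/-- A spanning tree of `G`: a connected spanning set of edges with `|V| - 1` edges. -/
def IsSpanningTree (A : Finset S.D) : Prop :=
  S.RevClosed A ∧ S.PrimalConnected A ∧ A.card = 2 * (Fintype.card S.V - 1)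

/-- A spanning cotree of `G`: a set of edges forming a spanning tree of the dual graph. -/
def IsSpanningCotree (A : Finset S.D) : Prop :=
  S.RevClosed A ∧ S.DualConnected A ∧ A.card = 2 * (Fintype.card S.F - 1)

/-- The clockwise neighborhood `∂⁻(F')` of a set of faces: all darts whose dual darts
have tail outside `F'` and head inside `F'`. -/
def cwBoundary (F' : Finset S.F) : Finset S.D :=
  univ.filter fun d => S.left d ∉ F' ∧ S.right d ∈ F'

end CombSurface

/-- A tree–cotree decomposition of `G`: a partition of the edges into a spanning tree `T`,
a spanning cotree `C`, and a set `L` of leftover edges. -/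
structure TreeCotree (S : CombSurface) where
  T : Finset S.D
  L : Finset S.D
  C : Finset S.D
  tree : S.IsSpanningTree T
  cotree : S.IsSpanningCotree C
  revL : S.RevClosed L
  disjTL : Disjoint T L
  disjTC : Disjoint T C
  disjLC : Disjoint L C
  cover : T ∪ L ∪ C = Finset.univ

/-- Homology signature data: a tree–cotree decomposition `(T, L, C)` together with an
ordering `ell 1, …, ell 2g` of (oriented) leftover edges of `L` and, for each `i`, the
oriented dual fundamental cycle `cyc i` of the edge of `ell i` with the cotree `C`,
represented as the `{-1,0,1}`-valued dual circulation supported on `C + ell i` that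
traverses the dart `ell i` (positively).  The homology signature of a dart `d` is the
integer vector `[d] = fun i => cyc i d`. -/
structure HomologyBasis (S : CombSurface) extends TreeCotree S where
  /-- the `i`-th leftover edge, oriented -/
  ell : Fin (2 * S.g) → S.D
  ell_mem : ∀ i, ell i ∈ L
  ell_inj : ∀ i j, (ell i = ell j ∨ ell i = S.rev (ell j)) → i = j
  ell_cover : ∀ d ∈ L, ∃ i, d = ell i ∨ d = S.rev (ell i)
  /-- the oriented dual fundamental cycle of `ell i` with the cotree `C`,
  as a dual circulation -/
  cyc : Fin (2 * S.g) → S.D → ℤ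
  cyc_antisym : ∀ i d, cyc i (S.rev d) = - cyc i d
  cyc_le_one : ∀ i d, |cyc i d| ≤ 1
  cyc_circ : ∀ i p, (∑ d ∈ univ.filter (fun d => S.right d = p), cyc i d) = 0
  cyc_supp : ∀ i d, cyc i d ≠ 0 → d ∈ C ∨ d = ell i ∨ d = S.rev (ell i)
  cyc_ell : ∀ i, cyc i (ell i) = 1

/-- The homology signature `[f]` of a flow `f`: `[f] = ∑ d, f d • [d]`. -/
def flowSig (S : CombSurface) (H : HomologyBasis S) (f : S.D → ℝ) : Fin (2 * S.g) → ℝ :=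
  fun i => ∑ d, f d * (H.cyc i d : ℝ)

/-- Strict lexicographic comparison of cost vectors. -/
def lexLt {n : ℕ} (a b : Fin n → ℝ) : Prop :=
  ∃ i, (∀ j, j < i → a j = b j) ∧ a i < b i

/-- Lexicographic comparison of cost vectors. -/
def lexLe {n : ℕ} (a b : Fin n → ℝ) : Prop := lexLt a b ∨ a = b

/-- The perturbed cost of a dart under the full lexicographic perturbation scheme:
`c'(d) = (c(d), 1) ++ [d] ++ (z(d))`. -/
def dartCostFull (S : CombSurface) (H : HomologyBasis S) (z : S.D → ℝ) (c : S.D → ℝ)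
    (d : S.D) : Fin (2 * S.g + 3) → ℝ :=
  Fin.cons (c d) (Fin.cons 1 (Fin.snoc (fun i => (H.cyc i d : ℝ)) (z d)))

/-- The perturbed cost of a dart under the modified lexicographic perturbation scheme
(no `+1` component): `c'(d) = (c(d)) ++ [d] ++ (z(d))`. -/
def dartCostMod (S : CombSurface) (H : HomologyBasis S) (z : S.D → ℝ) (c : S.D → ℝ)
    (d : S.D) : Fin (2 * S.g + 2) → ℝ :=
  Fin.cons (c d) (Fin.snoc (fun i => (H.cyc i d : ℝ)) (z d))

/-- The perturbed cost of a flow: `c'(f) = ∑ d, f d • c'(d)`. -/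
def flowCostFull (S : CombSurface) (H : HomologyBasis S) (z : S.D → ℝ) (c : S.D → ℝ)
    (f : S.D → ℝ) : Fin (2 * S.g + 3) → ℝ :=
  ∑ d, f d • dartCostFull S H z c d

/-- The unperturbed part of a cost vector from the modified scheme (first component). -/
def basePart {g : ℕ} (w : Fin (2 * g + 2) → ℝ) : ℝ := w ⟨0, by omega⟩

/-- The homology part of a cost vector from the modified scheme (middle `2g` components). -/
def homPart {g : ℕ} (w : Fin (2 * g + 2) → ℝ) : Fin (2 * g) → ℝ :=
  fun i => w ⟨(i : ℕ) + 1, by have := i.isLt; omega⟩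

/-- The face part of a cost vector from the modified scheme (last component). -/
def facePart {g : ℕ} (w : Fin (2 * g + 2) → ℝ) : ℝ := w ⟨2 * g + 1, by omega⟩

/-- Feasibility of a flow with respect to dart capacities `μ` and vertex demands `b`. -/
def Feasible (S : CombSurface) (μ : S.D → ENNReal) (b : S.V → ℝ) (f : S.D → ℝ) : Prop :=
  (∀ d, 0 ≤ f d ∧ ENNReal.ofReal (f d) ≤ μ d) ∧ ∀ v, S.imbalance f v = b v

/-- A minimum-cost feasible flow with respect to the perturbed costs `c'`, capacities `μ`,
and demands `b`, where costs are compared lexicographically. -/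
def IsMinCostFlow (S : CombSurface) (H : HomologyBasis S) (z : S.D → ℝ) (c : S.D → ℝ)
    (μ : S.D → ENNReal) (b : S.V → ℝ) (f : S.D → ℝ) : Prop :=
  Feasible S μ b f ∧ ∀ f', Feasible S μ b f' →
    lexLe (flowCostFull S H z c f) (flowCostFull S H z c f')

/-- `IsWalk S s t P`: the list of darts `P` is a directed walk from `s` to `t`. -/
def IsWalk (S : CombSurface) : S.V → S.V → List S.D → Prop
  | s, t, [] => s = t
  | s, t, d :: P => S.tail d = s ∧ IsWalk S (S.head d) t P

/-- `IsDualWalk S p q P`: the list of darts `P` is a directed walk from face `p` to face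
`q` in the dual graph. -/
def IsDualWalk (S : CombSurface) : S.F → S.F → List S.D → Prop
  | p, q, [] => p = q
  | p, q, d :: P => S.left d = p ∧ IsDualWalk S (S.right d) q P

/-- The cost vector of a walk: the sum of the cost vectors of its darts. -/
def pathCost {n : ℕ} (S : CombSurface) (cp : S.D → Fin n → ℝ) (P : List S.D) :
    Fin n → ℝ :=
  (P.map cp).sum

/-- `P` is a lexicographically shortest directed walk from `s` to `t` with respect to the
vector-valued dart costs `cp`. -/
def IsShortestWalk {n : ℕ} (S : CombSurface) (cp : S.D → Fin n → ℝ) (s t : S.V)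
    (P : List S.D) : Prop :=
  IsWalk S s t P ∧ ∀ Q, IsWalk S s t Q → lexLe (pathCost S cp P) (pathCost S cp Q)

/-- A list of darts viewed as a flow: each dart receives the number of times it occurs. -/
def listFlow (S : CombSurface) (P : List S.D) : S.D → ℝ := fun d => (P.count d : ℝ)

/-- The parent map of a spanning cotree rooted at `r`, given the successor darts. -/
def parentOfSucc (S : CombSurface) (r : S.F) (succ : S.F → S.D) (p : S.F) : S.F :=
  if p = r then r else S.right (succ p)

/-- The descendants of a face `p` in the cotree rooted at `r` (including `p` itself). -/
def descendants (S : CombSurface) (r : S.F) (succ : S.F → S.D) (p : S.F) :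
    Finset S.F :=
  univ.filter fun o => ∃ m : ℕ, (parentOfSucc S r succ)^[m] o = p

/-- The dual flow sending one unit of flow from every face to `r` along the cotree:
on a successor dart `succ p` its value is the number of descendants of `p`, on the
reversal of a successor dart it is the negation of that number, and on darts whose edges
are not in the cotree it is `0`. -/
def treeDrainage (S : CombSurface) (r : S.F) (succ : S.F → S.D) (d : S.D) : ℝ :=
  if ∃ p, p ≠ r ∧ succ p = d then ((descendants S r succ (S.left d)).card : ℝ)
  else if ∃ p, p ≠ r ∧ succ p = S.rev d then
    -((descendants S r succ (S.left (S.rev d))).card : ℝ)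
  else 0

/-- `RedOf S pred v u x`: in the tree rooted at `v` with predecessor darts `pred`, the
tree path from `v` to `x` passes through `u` (when `pred u` is the dart `v→u`, this says
exactly that the tree path from `v` to `x` uses the dart `v→u`, i.e. `x` is red). -/
def RedOf (S : CombSurface) (pred : S.V → S.D) (v u x : S.V) : Prop :=
  ∃ m : ℕ, (fun y => if y = v then v else S.tail (pred y))^[m] x = u

/-- The darts of the tree determined by the predecessor darts `pred` (both orientations
of each tree edge). -/
def predDarts (S : CombSurface) (pred : S.V → S.D) (v : S.V) : Set S.D :=
  {d | ∃ x, x ≠ v ∧ (pred x = d ∨ pred x = S.rev d)}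

/-- A shortest path tree rooted at `v` with respect to vector-valued dart costs `cost`,
together with the (lexicographic) shortest path distances: every non-root vertex has a
tense predecessor dart, all darts have non-negative slack, and the predecessor darts form
a tree reaching back to the root. -/
structure SPTree (S : CombSurface) {n : ℕ} (cost : S.D → Fin n → ℝ) (v : S.V) where
  pred : S.V → S.D
  dist : S.V → Fin n → ℝ
  dist_root : dist v = 0
  pred_head : ∀ x, x ≠ v → S.head (pred x) = x
  pred_tense : ∀ x, x ≠ v → dist x = dist (S.tail (pred x)) + cost (pred x)
  slack_nonneg : ∀ d, lexLe (dist (S.head d)) (dist (S.tail d) + cost d)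
  reach : ∀ x, ∃ m : ℕ, (fun y => if y = v then v else S.tail (pred y))^[m] x = v

namespace SPTree

variable {S : CombSurface} {n : ℕ} {cost : S.D → Fin n → ℝ} {v : S.V}

/-- The slack of a dart: `slack(x→y) = dist(x) + cost(x→y) − dist(y)`. -/
def slack (T : SPTree S cost v) (d : S.D) : Fin n → ℝ :=
  T.dist (S.tail d) + cost d - T.dist (S.head d)

/-- A vertex `x` is red if the tree path from the root `v` to `x` uses the dart `v→u`;
here `u` is the head of that dart. -/
def Red (T : SPTree S cost v) (u x : S.V) : Prop := RedOf S T.pred v u x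

/-- A dart is active if its tail is blue and its head is red. -/
def Active (T : SPTree S cost v) (u : S.V) (d : S.D) : Prop :=
  ¬ T.Red u (S.tail d) ∧ T.Red u (S.head d)

/-- The darts of the shortest path tree (both orientations of each tree edge). -/
def treeDarts (T : SPTree S cost v) : Set S.D := predDarts S T.pred v

end SPTree

/-- `K` realizes the fundamental cycle of the dart `d` with the tree whose darts are
`TD`: the concatenation `d :: K` is a simple closed walk whose non-`d` darts all lie in
the tree. -/
def IsFundCycleWalk (S : CombSurface) (TD : Set S.D) (d : S.D) (K : List S.D) : Prop :=
  IsWalk S (S.head d) (S.tail d) K ∧ (∀ e ∈ K, e ∈ TD) ∧ ((d :: K).map S.head).Nodup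

/-- The homology signature of the fundamental cycle `d :: K`. -/
def cycleSig (S : CombSurface) (H : HomologyBasis S) (d : S.D) (K : List S.D) :
    Fin (2 * S.g) → ℝ :=
  fun i => (H.cyc i d : ℝ) + (K.map fun e => (H.cyc i e : ℝ)).sum

/-- `Y` is a subgraph of the cut graph `X` in which every incident dual vertex other than
`q` and `r` has degree at least 2. -/
def IsCore (S : CombSurface) (X : Set S.D) (q r : S.F) (Y : Set S.D) : Prop :=
  Y ⊆ X ∧ (∀ d ∈ Y, S.rev d ∈ Y) ∧
    ∀ d ∈ Y, S.left d ≠ q → S.left d ≠ r → ∃ d' ∈ Y, d' ≠ d ∧ S.left d' = S.left d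

/-- The 2-core of the cut graph `X` (keeping `q` and `r`): the largest subgraph in which
every dual vertex other than `q` and `r` has degree at least 2; equivalently, the result
of repeatedly deleting degree-1 dual vertices other than `q` and `r`. -/
def twoCore (S : CombSurface) (X : Set S.D) (q r : S.F) : Set S.D :=
  ⋃₀ {Y | IsCore S X q r Y}

/-- An oriented cut path of the 2-core `X2`: a directed dual path whose darts lie in `X2`
and whose internal dual vertices are not `q` or `r` and have degree exactly 2 in `X2`. -/
def IsCutPath (S : CombSurface) (X2 : Set S.D) (q r : S.F) (P : List S.D) : Prop :=
  (∀ d ∈ P, d ∈ X2) ∧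
    P.Chain' fun d₁ d₂ => S.right d₁ = S.left d₂ ∧ S.right d₁ ≠ q ∧ S.right d₁ ≠ r ∧
      ∀ e ∈ X2, S.left e = S.right d₁ → e = S.rev d₁ ∨ e = d₂

/-- `L` is the clockwise facial walk around the face `p` (cyclically closed). -/
def IsFacialCycle (S : CombSurface) (p : S.F) (L : List S.D) : Prop :=
  L ≠ [] ∧ (∀ d ∈ L, S.left d = p) ∧
    List.Chain' (fun d₁ d₂ => d₂ = S.rev (S.next d₁)) (L ++ L.take 1)

/-- Elementary combinatorial homotopy moves in the surface punctured at the faces `o` and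
`r`, where the first endpoint of a walk may additionally slide forward or backward along
the fixed walk `R` (the walk `u₁→u₂→⋯→u_{k-1}`): removal/insertion of a spur, exchanging
two arcs that together bound a face other than `o` and `r`, and sliding the initial
endpoint along `R`. -/
inductive RHStep (S : CombSurface) (o r : S.F) (R : List S.D) :
    List S.D → List S.D → Prop where
  | spur (P Q : List S.D) (d : S.D) :
      RHStep S o r R (P ++ d :: S.rev d :: Q) (P ++ Q)
  | face (P Q A B : List S.D) (p : S.F) (hpo : p ≠ o) (hpr : p ≠ r)
      (hface : IsFacialCycle S p (A ++ (B.reverse.map S.rev))) :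
      RHStep S o r R (P ++ A ++ Q) (P ++ B ++ Q)
  | slide (P : List S.D) (d : S.D) (hd : d ∈ R) :
      RHStep S o r R (d :: P) P

/-- Restricted homotopy of walks with respect to a dart whose left face is `o`: homotopy
in the surface punctured at `o` and `r`, where the first endpoint may move forward or
backward along the walk `R`. -/
def RHomotopic (S : CombSurface) (o r : S.F) (R : List S.D) (P₁ P₂ : List S.D) : Prop :=
  Relation.EqvGen (RHStep S o r R) P₁ P₂

/-!
For a dual circulation `η`, subtract the gradient of its potential along the tree `T`: the
result `φ` is a dual circulation vanishing on `T`, and the sum of `η` around `cycle(T, d)`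
is `φ d`. The support of a dual circulation has no dual vertex of degree one, so it lies in
the 2-core of the cut graph; at an interior dual vertex of a cut path only the two path
darts can carry `φ`, so conservation makes `φ` constant along the path. Hence the two
fundamental cycles pair equally with every dual circulation. For the circulations `cyc i`
this is the equality of signatures, and since the boundary flows are exactly the flows
annihilating all dual circulations, the difference of the cycles is a boundary.
-/

lemma Module.Dual.apply_eq_sum_single {ι R : Type*} [Fintype ι] [DecidableEq ι]
    [CommSemiring R] (φ : Module.Dual R (ι → R)) (x : ι → R) :
    φ x = ∑ i, x i * φ (Pi.single i 1) := by
  conv_lhs => rw [pi_eq_sum_univ' x]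
  simp [map_sum, smul_eq_mul]

namespace CombSurface

variable (S : CombSurface)

@[simp] lemma right_rev (d : S.D) : S.right (S.rev d) = S.left d := by
  rw [right, S.rev_invol]

@[simp] lemma left_rev (d : S.D) : S.left (S.rev d) = S.right d := rfl

@[simp] lemma tail_rev (d : S.D) : S.tail (S.rev d) = S.head d := by
  rw [tail, S.rev_invol]

@[simp] lemma head_rev (d : S.D) : S.head (S.rev d) = S.tail d := rfl

lemma sum_comp_rev (g : S.D → ℝ) : ∑ d, g (S.rev d) = ∑ d, g d :=
  Equiv.sum_comp (Function.Involutive.toPerm S.rev S.rev_invol) g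

lemma sum_filter_right_eq (g : S.D → ℝ) (p : S.F) :
    ∑ e ∈ univ.filter (fun e => S.right e = p), g e
      = ∑ e ∈ univ.filter (fun e => S.left e = p), g (S.rev e) :=
  Finset.sum_nbij' S.rev S.rev (by simp) (by simp) (fun a _ => S.rev_invol a)
    (fun a _ => S.rev_invol a) (fun a _ => by rw [S.rev_invol])

/-- `rev ∘ next` permutes the darts around a face, and the tail of `rev (next e)` is the
head of `e`. -/
lemma sum_filter_left_head_eq (g : S.V → ℝ) (p : S.F) :
    ∑ e ∈ univ.filter (fun e => S.left e = p), g (S.head e)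
      = ∑ e ∈ univ.filter (fun e => S.left e = p), g (S.tail e) := by
  let ν := Equiv.ofBijective S.next S.next_bij
  have hν : ∀ e, S.rev (S.next (ν.symm (S.rev e))) = e := fun e => by
    rw [show S.next (ν.symm (S.rev e)) = ν (ν.symm (S.rev e)) from rfl, ν.apply_symm_apply,
      S.rev_invol]
  refine Finset.sum_nbij' (fun e => S.rev (S.next e)) (fun e => ν.symm (S.rev e)) ?_ ?_ ?_
    (fun a _ => hν a) fun a _ => by simp [S.head_next]
  · intro a ha
    simpa [S.left_step] using ha
  · intro a ha
    rw [Finset.mem_filter] at ha ⊢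
    exact ⟨Finset.mem_univ _, by rw [← S.left_step, hν, ha.2]⟩
  · intro a _
    rw [S.rev_invol]
    exact ν.symm_apply_apply a

def IsDualCirc (η : S.D → ℝ) : Prop :=
  (∀ d, η (S.rev d) = - η d) ∧ ∀ p, ∑ e ∈ univ.filter (fun e => S.left e = p), η e = 0

def grad (ψ : S.V → ℝ) (d : S.D) : ℝ := ψ (S.head d) - ψ (S.tail d)

def dualGrad : (S.F → ℝ) →ₗ[ℝ] S.D → ℝ :=
  LinearMap.funLeft ℝ ℝ S.right - LinearMap.funLeft ℝ ℝ S.left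

lemma dualGrad_apply (α : S.F → ℝ) (d : S.D) :
    S.dualGrad α d = α (S.right d) - α (S.left d) := rfl

variable {S}

lemma isDualCirc_grad (ψ : S.V → ℝ) : S.IsDualCirc (S.grad ψ) := by
  refine ⟨fun d => by simp [grad], fun p => ?_⟩
  simp only [grad, Finset.sum_sub_distrib, S.sum_filter_left_head_eq, sub_self]

lemma IsDualCirc.sub {η ζ : S.D → ℝ} (hη : S.IsDualCirc η) (hζ : S.IsDualCirc ζ) :
    S.IsDualCirc (η - ζ) := by
  refine ⟨fun d => ?_, fun p => ?_⟩
  · simp only [Pi.sub_apply, hη.1, hζ.1]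
    ring
  · simp only [Pi.sub_apply, Finset.sum_sub_distrib, hη.2, hζ.2, sub_self]

lemma IsDualCirc.isCore_support {φ : S.D → ℝ} (hφ : S.IsDualCirc φ) {X : Set S.D}
    (hX : ∀ d, φ d ≠ 0 → d ∈ X) (q r : S.F) : IsCore S X q r {d | φ d ≠ 0} := by
  refine ⟨hX, fun d hd => by simpa [hφ.1] using hd, fun d hd _ _ => ?_⟩
  by_contra! hlone
  refine hd ?_
  rw [← hφ.2 (S.left d), Finset.sum_eq_single_of_mem d (by simp)]
  intro e he hne
  by_contra he0
  exact hlone e he0 hne (by simpa using he)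

lemma IsDualCirc.support_subset_twoCore {φ : S.D → ℝ} (hφ : S.IsDualCirc φ) {X : Set S.D}
    (hX : ∀ d, φ d ≠ 0 → d ∈ X) (q r : S.F) : {d | φ d ≠ 0} ⊆ twoCore S X q r :=
  Set.subset_sUnion_of_mem (hφ.isCore_support hX q r)

lemma IsDualCirc.eq_of_degree_two {φ : S.D → ℝ} (hφ : S.IsDualCirc φ)
    {a b : S.D} (hab : S.right a = S.left b)
    (hdeg : ∀ e, φ e ≠ 0 → S.left e = S.right a → e = S.rev a ∨ e = b) : φ b = φ a := by
  have hpair : ∑ e ∈ {S.rev a, b}, φ e = 0 := by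
    rw [← hφ.2 (S.right a)]
    refine Finset.sum_subset (fun e he => ?_) fun e he hnot => ?_
    · rcases Finset.mem_insert.1 he with rfl | he
      · simp
      · simp [Finset.mem_singleton.1 he, hab]
    · by_contra he0
      rcases hdeg e he0 (by simpa using he) with rfl | rfl <;> simp at hnot
  by_cases hba : S.rev a = b
  · subst hba
    have hb : φ (S.rev a) = 0 := by simpa using hpair
    linarith [hφ.1 a]
  · rw [Finset.sum_pair hba, hφ.1] at hpair
    linarith

lemma IsDualCirc.eq_of_mem_cutPath {φ : S.D → ℝ} (hφ : S.IsDualCirc φ) {X : Set S.D}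
    (hX : ∀ d, φ d ≠ 0 → d ∈ X) {q r : S.F} {P : List S.D}
    (hP : IsCutPath S (twoCore S X q r) q r P) {d₁ d₂ : S.D} (h₁ : d₁ ∈ P) (h₂ : d₂ ∈ P) :
    φ d₁ = φ d₂ := by
  have hne : P ≠ [] := List.ne_nil_of_mem h₁
  have hconst : ∀ d ∈ P, φ d = φ (P.head hne) :=
    List.IsChain.induction _ P hP.2
      (fun a b ⟨hab, _, _, hdeg⟩ ha => (hφ.eq_of_degree_two hab
        fun e he0 he => hdeg e (hφ.support_subset_twoCore hX q r he0) he).trans ha)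
      fun _ => rfl
  rw [hconst d₁ h₁, hconst d₂ h₂]

lemma isDualCirc_of_dual_dualGrad_eq_zero (φ : Module.Dual ℝ (S.D → ℝ))
    (hφ : ∀ α, φ (S.dualGrad α) = 0) :
    S.IsDualCirc fun d => φ (Pi.single d 1) - φ (Pi.single (S.rev d) 1) := by
  set e : S.D → ℝ := fun d => φ (Pi.single d 1)
  refine ⟨fun d => by simp only [S.rev_invol, neg_sub], fun p => ?_⟩
  have hstar : ∑ d ∈ univ.filter (fun d => S.right d = p), e d
      - ∑ d ∈ univ.filter (fun d => S.left d = p), e d = 0 := by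
    rw [← hφ (Pi.single p 1), φ.apply_eq_sum_single, Finset.sum_filter, Finset.sum_filter,
      ← Finset.sum_sub_distrib]
    refine Finset.sum_congr rfl fun d _ => ?_
    simp only [dualGrad_apply, Pi.single_apply]
    split_ifs <;> simp [e]
  rw [Finset.sum_sub_distrib, ← S.sum_filter_right_eq e p]
  linarith

lemma exists_isBoundary_of_forall_isDualCirc (f : S.D → ℝ)
    (hf : ∀ η, S.IsDualCirc η → ∑ d, f d * η d = 0) : ∃ α, S.IsBoundary f α := by
  suffices (fun d => f d - f (S.rev d)) ∈ LinearMap.range S.dualGrad by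
    obtain ⟨α, hα⟩ := this
    exact ⟨α, fun d => (congrFun hα d).symm⟩
  by_contra hx
  obtain ⟨φ, hφx, hφU⟩ := Submodule.exists_dual_map_eq_bot_of_notMem hx inferInstance
  have hφ : ∀ α, φ (S.dualGrad α) = 0 := fun α => by
    simpa [hφU] using Submodule.mem_map_of_mem (f := φ) (LinearMap.mem_range_self S.dualGrad α)
  apply hφx
  have h := hf _ (isDualCirc_of_dual_dualGrad_eq_zero φ hφ)
  rw [φ.apply_eq_sum_single]
  simp only [mul_sub, sub_mul, Finset.sum_sub_distrib] at h ⊢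
  rw [← S.sum_comp_rev (fun d => f (S.rev d) * φ (Pi.single d 1))]
  simp only [S.rev_invol]
  linarith

end CombSurface

section

variable {S : CombSurface}

lemma HomologyBasis.isDualCirc_cyc (H : HomologyBasis S) (i : Fin (2 * S.g)) :
    S.IsDualCirc (fun d => (H.cyc i d : ℝ)) := by
  have hanti : ∀ d, (H.cyc i (S.rev d) : ℝ) = -(H.cyc i d : ℝ) := fun d => by
    rw [H.cyc_antisym]
    push_cast
    rfl
  refine ⟨hanti, fun p => ?_⟩
  have hcirc : ∑ e ∈ univ.filter (fun e => S.right e = p), (H.cyc i e : ℝ) = 0 := by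
    exact_mod_cast H.cyc_circ i p
  rw [S.sum_filter_right_eq] at hcirc
  simpa [hanti] using hcirc

lemma sum_listFlow_mul (P : List S.D) (η : S.D → ℝ) :
    ∑ d, listFlow S P d * η d = (P.map η).sum := by
  rw [Finset.sum_list_map_count, ← Finset.sum_subset (Finset.subset_univ P.toFinset)]
  · simp [listFlow, nsmul_eq_mul]
  · intro d _ hd
    simp [listFlow, List.count_eq_zero.2 (by simpa using hd)]

lemma IsWalk.sum_map_eq {η : S.D → ℝ} {ψ : S.V → ℝ} :
    ∀ {a b : S.V} {K : List S.D}, IsWalk S a b K → (∀ e ∈ K, η e = S.grad ψ e) →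
      (K.map η).sum = ψ b - ψ a
  | a, b, [], hw, _ => by simp [show a = b from hw]
  | a, b, e :: K, ⟨hta, hw⟩, hK => by
    rw [List.map_cons, List.sum_cons, hK e List.mem_cons_self,
      IsWalk.sum_map_eq hw fun e' he' => hK e' (List.mem_cons_of_mem _ he'),
      CombSurface.grad, hta]
    ring

lemma IsFundCycleWalk.sum_map_eq {TD : Set S.D} {d : S.D} {K : List S.D}
    (hK : IsFundCycleWalk S TD d K) {η : S.D → ℝ} {ψ : S.V → ℝ}
    (hψ : ∀ e ∈ TD, η e = S.grad ψ e) :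
    ((d :: K).map η).sum = (η - S.grad ψ) d := by
  rw [List.map_cons, List.sum_cons, hK.1.sum_map_eq fun e he => hψ e (hK.2.1 e he),
    Pi.sub_apply, CombSurface.grad]
  ring

namespace SPTree

variable {n : ℕ} {cost : S.D → Fin n → ℝ} {v : S.V} (T : SPTree S cost v)

def parent (y : S.V) : S.V := if y = v then v else S.tail (T.pred y)

lemma exists_iterate_parent_eq_root : ∃ M, ∀ x, T.parent^[M] x = v := by
  choose m hm using T.reach
  refine ⟨univ.sup m, fun x => ?_⟩
  have hfix : Function.IsFixedPt T.parent v := by simp [Function.IsFixedPt, parent]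
  rw [← Nat.sub_add_cancel (Finset.le_sup (Finset.mem_univ x)), Function.iterate_add_apply]
  exact (hm x).symm ▸ hfix.iterate _

/-- The potential is the sum of `η` along the tree path from the root, truncated at a depth
`M` beyond which every vertex has reached the root. -/
lemma exists_potential_pred (η : S.D → ℝ) :
    ∃ ψ : S.V → ℝ, ∀ x, x ≠ v → η (T.pred x) = ψ x - ψ (T.parent x) := by
  obtain ⟨M, hM⟩ := T.exists_iterate_parent_eq_root
  let ρ : S.V → ℝ := fun y => if y = v then 0 else η (T.pred y)
  refine ⟨fun x => ∑ k ∈ range M, ρ (T.parent^[k] x), fun x hx => ?_⟩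
  have htele := (Finset.sum_range_succ' (fun k => ρ (T.parent^[k] x)) M).symm.trans
    (Finset.sum_range_succ _ M)
  simp only [Function.iterate_succ_apply, hM, Function.iterate_zero_apply] at htele
  simp only [ρ, if_neg hx, if_pos rfl] at htele
  linarith

lemma exists_grad_eq_on_treeDarts {η : S.D → ℝ} (hanti : ∀ d, η (S.rev d) = - η d) :
    ∃ ψ : S.V → ℝ, ∀ d ∈ T.treeDarts, η d = S.grad ψ d := by
  obtain ⟨ψ, hψ⟩ := T.exists_potential_pred η
  refine ⟨ψ, fun d ⟨x, hx, hxd⟩ => ?_⟩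
  have hhead : S.head (T.pred x) = x := T.pred_head x hx
  have htail : S.tail (T.pred x) = T.parent x := by simp [parent, hx]
  rcases hxd with rfl | hxd
  · rw [hψ x hx, CombSurface.grad, hhead, htail]
  · rw [← S.rev_invol d, ← hxd, hanti, hψ x hx, CombSurface.grad, S.head_rev, S.tail_rev,
      hhead, htail]
    ring

theorem sum_map_fundCycle_eq_of_mem_cutPath {η : S.D → ℝ} (hη : S.IsDualCirc η) {q r : S.F}
    {P : List S.D} (hP : IsCutPath S (twoCore S {d | d ∉ T.treeDarts} q r) q r P)
    {d₁ d₂ : S.D} (h₁ : d₁ ∈ P) (h₂ : d₂ ∈ P) {K₁ K₂ : List S.D}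
    (hK₁ : IsFundCycleWalk S T.treeDarts d₁ K₁) (hK₂ : IsFundCycleWalk S T.treeDarts d₂ K₂) :
    ((d₁ :: K₁).map η).sum = ((d₂ :: K₂).map η).sum := by
  obtain ⟨ψ, hψ⟩ := T.exists_grad_eq_on_treeDarts hη.1
  rw [hK₁.sum_map_eq hψ, hK₂.sum_map_eq hψ]
  exact (hη.sub (CombSurface.isDualCirc_grad ψ)).eq_of_mem_cutPath
    (fun d hd hT => hd (sub_eq_zero.2 (hψ d hT))) hP h₁ h₂

end SPTree

end

theorem holiest_cut_path_sigs_general (S : CombSurface) (H : HomologyBasis S) (z : S.D → ℝ)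
    (r : S.F) (c : S.D → ℝ)
    (duv : S.D)
    (lam : Fin (2 * S.g + 2) → ℝ)
    (T : SPTree S (fun d => if d = duv then lam else dartCostMod S H z c d)
      (S.tail duv))
    (P : List S.D)
    (hP : IsCutPath S (twoCore S {d | d ∉ T.treeDarts} (S.right duv) r)
      (S.right duv) r P)
    (d₁ d₂ : S.D) (h₁ : d₁ ∈ P) (h₂ : d₂ ∈ P)
    (K₁ K₂ : List S.D)
    (hK₁ : IsFundCycleWalk S T.treeDarts d₁ K₁)
    (hK₂ : IsFundCycleWalk S T.treeDarts d₂ K₂) :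
    (∃ α : S.F → ℝ, S.IsBoundary
        (fun e => listFlow S (d₁ :: K₁) e - listFlow S (d₂ :: K₂) e) α) ∧
      cycleSig S H d₁ K₁ = cycleSig S H d₂ K₂ := by
  have hpair : ∀ η, S.IsDualCirc η → ((d₁ :: K₁).map η).sum = ((d₂ :: K₂).map η).sum :=
    fun η hη => T.sum_map_fundCycle_eq_of_mem_cutPath hη hP h₁ h₂ hK₁ hK₂
  refine ⟨CombSurface.exists_isBoundary_of_forall_isDualCirc _ fun η hη => ?_,
    funext fun i => hpair _ (H.isDualCirc_cyc i)⟩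
  simp only [sub_mul, Finset.sum_sub_distrib, sum_listFlow_mul, hpair η hη, sub_self]

/-- Lemma `fundamental_cycle_sigs` of the paper.  Fix an oriented cut
path `P` of the 2-core of the cut graph `X` complementary to the holiest shortest path
tree `T` (where `X` consists of the darts not in `T`, and the 2-core keeps the dual
vertices `q = right(v→u)` and `r`), and let `d₁` and `d₂` be darts of `P`.  Then the
fundamental cycles `cycle(T, d₁)` and `cycle(T, d₂)` (realized by the simple closed walks
`d₁ :: K₁` and `d₂ :: K₂`) are homologous; in particular their homology signatures are
equal. -/
theorem holiest_cut_path_sigs (S : CombSurface) (H : HomologyBasis S) (z : S.D → ℝ)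
    (r : S.F) (hz : S.IsDrainage z r) (c : S.D → ℝ)
    (hpos : ∀ (w : S.V) (P : List S.D), P ≠ [] → IsWalk S w w P → 0 < (P.map c).sum)
    (duv : S.D) (hleft : S.left duv = r) (hne : S.head duv ≠ S.tail duv)
    (lam : Fin (2 * S.g + 2) → ℝ)
    (T : SPTree S (fun d => if d = duv then lam else dartCostMod S H z c d)
      (S.tail duv))
    (hpredu : T.pred (S.head duv) = duv)
    (P : List S.D)
    (hP : IsCutPath S (twoCore S {d | d ∉ T.treeDarts} (S.right duv) r)
      (S.right duv) r P)
    (d₁ d₂ : S.D) (h₁ : d₁ ∈ P) (h₂ : d₂ ∈ P)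
    (K₁ K₂ : List S.D)
    (hK₁ : IsFundCycleWalk S T.treeDarts d₁ K₁)
    (hK₂ : IsFundCycleWalk S T.treeDarts d₂ K₂) :
    (∃ α : S.F → ℝ, S.IsBoundary
        (fun e => listFlow S (d₁ :: K₁) e - listFlow S (d₂ :: K₂) e) α) ∧
      cycleSig S H d₁ K₁ = cycleSig S H d₂ K₂ :=
  holiest_cut_path_sigs_general S H z r c duv lam T P hP d₁ d₂ h₁ h₂ K₁ K₂ hK₁ hK₂
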